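/- arXiv:1905.03814 — 4 statements merged into one kernel-verified Lean document; each statement's English description precedes it below -/
import Mathlib

section
/- Let m ≥ 2, let a_1,…,a_m ≥ 0 be nonnegative reals, and let ε ≥ 0. Define the clipping operator clip_ε(x) = x·𝟙{x ≥ ε}. Then clip_ε(∑_{i=1}^m a_i) ≤ 2·∑_{i=1}^m clip_{ε/(2m)}(a_i). -/
noncomputable def clip (ε x : ℝ) : ℝ := if ε ≤ x then x else 0

theorem stmt0 (m : ℕ) (hm : 2 ≤ m) (a : Fin m → ℝ) (ha : ∀ i, 0 ≤ a i)
    (ε : ℝ) (hε : 0 ≤ ε) :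
    clip ε (∑ i, a i) ≤ 2 * ∑ i, clip (ε / (2 * m)) (a i) := by
  have hm0 : (0:ℝ) < m := by positivity
  have hclip_nonneg : ∀ i, 0 ≤ clip (ε / (2 * m)) (a i) := by
    intro i; unfold clip; split <;> simp [ha i]
  have hsum_nonneg : 0 ≤ ∑ i, clip (ε / (2 * m)) (a i) :=
    Finset.sum_nonneg fun i _ => hclip_nonneg i
  simp only [clip] at hsum_nonneg hclip_nonneg ⊢
  split
  · rename_i h
    have key : ∀ i, a i - ε / (2 * m) ≤ clip (ε / (2 * m)) (a i) := by
      intro i; unfold clip; split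
      · linarith [div_nonneg hε (by positivity : (0:ℝ) ≤ 2 * m)]
      · rename_i h'; linarith [lt_of_not_ge h']
    have hsum : (∑ i, a i) - m * (ε / (2 * m)) ≤ ∑ i, clip (ε / (2 * m)) (a i) := by
      have := Finset.sum_le_sum (fun i (_ : i ∈ Finset.univ) => key i)
      simpa [Finset.sum_sub_distrib, Finset.card_univ] using this
    have : m * (ε / (2 * m)) = ε / 2 := by field_simp
    rw [this] at hsum
    simp only [clip] at hsum
    linarith
  · linarith
end

section
/- Fix δ ∈ (0,1/2), M ≥ 2, and define L̃(u) = log(M·max{u,1}/δ). There exists a universal constant c > 0 such that for every b > 0 and every u ≥ L̃(1 + 1/b)/(c·b), one has L̃(u)/u ≤ b. -/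
theorem stmt10 :
    ∃ c > 0, ∀ δ M : ℝ, 0 < δ → δ < 1 / 2 → 2 ≤ M →
      ∀ b : ℝ, 0 < b → ∀ u : ℝ,
        Real.log (M * max (1 + 1 / b) 1 / δ) / (c * b) ≤ u →
        Real.log (M * max u 1 / δ) / u ≤ b := by
  refine ⟨1/2, by norm_num, ?_⟩
  intro δ M hδ hδ2 hM b hb u hu
  have hb' : (0:ℝ) < 1 / b := by positivity
  have hmax : max (1 + 1 / b) 1 = 1 + 1 / b := max_eq_left (by linarith)
  rw [hmax] at hu
  have hMδpos : 0 < M / δ := by positivity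
  have hMδ : (4:ℝ) ≤ M / δ := by
    rw [le_div_iff₀ hδ]; nlinarith
  have hlog4 : (1:ℝ) ≤ Real.log 4 := by
    have h2 := Real.log_two_gt_d9
    have : Real.log 4 = 2 * Real.log 2 := by
      rw [show (4:ℝ) = 2^2 by norm_num, Real.log_pow]; push_cast; ring
    rw [this]; linarith
  have hP : (1:ℝ) ≤ Real.log (M / δ) :=
    hlog4.trans (Real.log_le_log (by norm_num) hMδ)
  have hlogb1 : 0 ≤ Real.log (1 + 1 / b) :=
    Real.log_nonneg (by linarith)
  have hAeq : Real.log (M * (1 + 1 / b) / δ)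
      = Real.log (M / δ) + Real.log (1 + 1 / b) := by
    rw [show M * (1 + 1 / b) / δ = (M / δ) * (1 + 1 / b) by ring,
      Real.log_mul (ne_of_gt hMδpos) (by positivity)]
  set P := Real.log (M / δ) with hPdef
  set Q := Real.log (1 + 1 / b) with hQdef
  have hApos : 0 < P + Q := by linarith
  have hu0 : 0 < u := lt_of_lt_of_le (by positivity) (hAeq ▸ hu)
  have hbu : 2 * (P + Q) ≤ b * u := by
    rw [hAeq, div_le_iff₀ (by positivity)] at hu
    nlinarith
  rcases le_or_gt u 1 with hle | hgt
  · have : max u 1 = 1 := max_eq_right hle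
    rw [this, mul_one, div_le_iff₀ hu0]
    nlinarith
  · have hmu : max u 1 = u := max_eq_left hgt.le
    rw [hmu, div_le_iff₀ hu0,
      show M * u / δ = (M / δ) * u by ring,
      Real.log_mul (ne_of_gt hMδpos) (by positivity)]
    -- need: P + log u ≤ b * u
    have h1 : Real.log (b * u / 2) ≤ b * u / 2 - 1 :=
      Real.log_le_sub_one_of_pos (by positivity)
    have h2 : Real.log (b * u / 2) = Real.log b + Real.log u - Real.log 2 := by
      rw [Real.log_div (by positivity) (by norm_num),
        Real.log_mul (ne_of_gt hb) (ne_of_gt hu0)]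
    have hlog2 : Real.log 2 ≤ 1 := by
      have := Real.log_le_sub_one_of_pos (show (0:ℝ) < 2 by norm_num)
      linarith
    have h3 : -Real.log b ≤ Q := by
      rw [hQdef, ← Real.log_inv]
      exact Real.log_le_log (by positivity) (by rw [one_div] at hb' ⊢; linarith)
    have h4 : Real.log u ≤ b * u / 2 + Q := by
      rw [h2] at h1; linarith
    linarith
end

section
/- Fix δ ∈ (0,1/2), M ≥ 2, C > 0, ε ∈ (0, H] for some H ≥ 1, with log C ≤ c₀·log(2M) for a constant c₀. Define f(u) = clip_ε(√(C·log(M·u/δ)/u)) for u ≥ H, where clip_ε(x) = x·𝟙{x ≥ ε}. Then there is a universal constant c (depending only on c₀) such that for all N ≥ H, ∫_H^N f(u/4) du ≤ c·min{ √(C·N·log(M·N/δ)), (C/ε)·log((M/δ)·min{N, H/ε}) }. -/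
private lemma clip_le_self (ε : ℝ) {x : ℝ} (hx : 0 ≤ x) : clip ε x ≤ x := by
  unfold clip; split_ifs <;> linarith

private lemma clip_nonneg (ε : ℝ) {x : ℝ} (hx : 0 ≤ x) : 0 ≤ clip ε x := by
  unfold clip; split_ifs <;> linarith

private lemma log_le_half {x : ℝ} (hx : 0 < x) : Real.log x ≤ x / 2 := by
  have h1 := Real.log_sqrt hx.le
  have h2 := Real.log_le_sub_one_of_pos (Real.sqrt_pos.mpr hx)
  nlinarith [Real.sq_sqrt hx.le, Real.sqrt_nonneg x, sq_nonneg (Real.sqrt x - 2)]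

set_option maxHeartbeats 2000000 in
theorem stmt11 (c₀ : ℝ) (hc₀ : 0 < c₀) :
    ∃ c > 0, ∀ δ M C H ε : ℝ,
      0 < δ → δ < 1 / 2 → 2 ≤ M → 0 < C → 1 ≤ H → 0 < ε → ε ≤ H →
      Real.log C ≤ c₀ * Real.log (2 * M) →
      ∀ N : ℝ, H ≤ N →
        (∫ u in H..N, clip ε (Real.sqrt (C * Real.log (M * (u / 4) / δ) / (u / 4)))) ≤
          c * min (Real.sqrt (C * N * Real.log (M * N / δ)))
                  ((C / ε) * Real.log ((M / δ) * min N (H / ε))) := by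
  refine ⟨48 * (1 + c₀), by nlinarith, ?_⟩
  intro δ M C H ε hδ hδ2 hM hC hH hε hεH hlogC N hN
  set F : ℝ → ℝ := fun u => clip ε (Real.sqrt (C * Real.log (M * (u / 4) / δ) / (u / 4)))
    with hFdef
  have hMδ : 4 < M / δ := by rw [lt_div_iff₀ hδ]; nlinarith
  have hA0 : 0 < Real.log (M / δ) := Real.log_pos (by linarith)
  have hm1 : (1 : ℝ) ≤ min N (H / ε) := le_min (by linarith) ((one_le_div hε).mpr hεH)
  set P : ℝ := Real.log (M / δ * min N (H / ε)) with hPdef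
  have hP0 : 0 < P := Real.log_pos (by nlinarith)
  have hPA : Real.log (M / δ) ≤ P := Real.log_le_log (by linarith)
    (le_mul_of_one_le_right (by linarith) hm1)
  set c₂ : ℝ := 4 + 4 * c₀ with hc₂def
  have hc₂1 : (1 : ℝ) ≤ c₂ := by simp only [hc₂def]; linarith
  set T : ℝ := 4 * C * (c₂ * P) / ε ^ 2 with hTdef
  -- generic sqrt bound
  have hg_le : ∀ u : ℝ, H ≤ u → ∀ D : ℝ, 0 ≤ D → Real.log (M * (u / 4) / δ) ≤ D →
      Real.sqrt (C * Real.log (M * (u / 4) / δ) / (u / 4)) ≤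
        Real.sqrt (4 * C * D) / Real.sqrt u := by
    intro u hu D hD0 hD
    have hu0 : (0 : ℝ) < u := by linarith
    have h1 : C * Real.log (M * (u / 4) / δ) / (u / 4) ≤ 4 * C * D / u := by
      rw [div_le_div_iff₀ (by linarith) hu0]
      nlinarith [mul_nonneg (mul_nonneg (sub_nonneg.mpr hD) hC.le) hu0.le]
    calc Real.sqrt (C * Real.log (M * (u / 4) / δ) / (u / 4))
        ≤ Real.sqrt (4 * C * D / u) := Real.sqrt_le_sqrt h1
      _ = Real.sqrt (4 * C * D) / Real.sqrt u :=
          Real.sqrt_div (mul_nonneg (by linarith) hD0) u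
  -- support claim
  have hLP : ∀ u : ℝ, H ≤ u → u ≤ N →
      ε ≤ Real.sqrt (C * Real.log (M * (u / 4) / δ) / (u / 4)) →
      Real.log (M * (u / 4) / δ) ≤ c₂ * P ∧ u ≤ T := by
    intro u hu1 hu2 hgu
    have hu0 : (0 : ℝ) < u := by linarith
    have harg : 0 < M * (u / 4) / δ := div_pos (mul_pos (by linarith) (by linarith)) hδ
    have hsq : ε ^ 2 ≤ C * Real.log (M * (u / 4) / δ) / (u / 4) := (Real.le_sqrt' hε).mp hgu
    have hεu : ε ^ 2 * (u / 4) ≤ C * Real.log (M * (u / 4) / δ) :=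
      (le_div_iff₀ (by linarith)).mp hsq
    have hL0 : 0 < Real.log (M * (u / 4) / δ) := by
      nlinarith [mul_pos (pow_pos hε 2) (show (0 : ℝ) < u / 4 by linarith)]
    have hLub : Real.log (M * (u / 4) / δ) ≤ Real.log (M / δ) + Real.log u := by
      have he : M * (u / 4) / δ ≤ M / δ * u := by
        rw [show M * (u / 4) / δ = M / δ * (u / 4) by ring]
        nlinarith [div_pos (show (0:ℝ) < M by linarith) hδ]
      calc Real.log (M * (u / 4) / δ) ≤ Real.log (M / δ * u) := Real.log_le_log harg he
        _ = Real.log (M / δ) + Real.log u :=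
            Real.log_mul (ne_of_gt (by linarith)) (ne_of_gt hu0)
    have hclaim : Real.log (M * (u / 4) / δ) ≤ c₂ * P := by
      by_cases hcN : N ≤ H / ε
      · have hmin : min N (H / ε) = N := min_eq_left hcN
        have hPN : P = Real.log (M / δ) + Real.log N := by
          rw [hPdef, hmin, Real.log_mul (ne_of_gt (by linarith)) (ne_of_gt (by linarith))]
        have h5 : Real.log u ≤ Real.log N := Real.log_le_log hu0 hu2
        have h6 : P ≤ c₂ * P := le_mul_of_one_le_left hP0.le hc₂1
        rw [hPN] at h6 ⊢
        linarith
      · push_neg at hcN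
        have hmin : min N (H / ε) = H / ε := min_eq_right hcN.le
        have hHe1 : (1 : ℝ) ≤ H / ε := (one_le_div hε).mpr hεH
        have hPHe : P = Real.log (M / δ) + Real.log (H / ε) := by
          rw [hPdef, hmin, Real.log_mul (ne_of_gt (by linarith)) (ne_of_gt (by linarith))]
        have hlogHe : 0 ≤ Real.log (H / ε) := Real.log_nonneg hHe1
        have huT : u ≤ 4 * C * Real.log (M * (u / 4) / δ) / ε ^ 2 := by
          rw [le_div_iff₀ (pow_pos hε 2)]; nlinarith
        have hlogu : Real.log u ≤ Real.log 4 + Real.log C +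
            Real.log (Real.log (M * (u / 4) / δ)) - 2 * Real.log ε := by
          have h1 : Real.log u ≤ Real.log (4 * C * Real.log (M * (u / 4) / δ) / ε ^ 2) :=
            Real.log_le_log hu0 huT
          have hne1 : 4 * C * Real.log (M * (u / 4) / δ) ≠ 0 :=
            ne_of_gt (mul_pos (by linarith) hL0)
          have hne2 : (ε : ℝ) ^ 2 ≠ 0 := pow_ne_zero 2 (ne_of_gt hε)
          rw [Real.log_div hne1 hne2,
            Real.log_mul (by positivity) (ne_of_gt hL0),
            Real.log_mul (by norm_num) (ne_of_gt hC), Real.log_pow] at h1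
          push_cast at h1
          linarith
        have hlogL : Real.log (Real.log (M * (u / 4) / δ)) ≤
            Real.log (M * (u / 4) / δ) / 2 := log_le_half hL0
        have hlog4 : Real.log 4 ≤ Real.log (M / δ) := Real.log_le_log (by norm_num) hMδ.le
        have hlogε : - Real.log ε ≤ Real.log (H / ε) := by
          rw [Real.log_div (ne_of_gt (by linarith : (0:ℝ) < H)) (ne_of_gt hε)]
          have : 0 ≤ Real.log H := Real.log_nonneg hH
          linarith
        have hlogC2 : Real.log C ≤ 2 * c₀ * Real.log (M / δ) := by
          have h2M : Real.log (2 * M) ≤ 2 * Real.log (M / δ) := by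
            rw [Real.log_mul (by norm_num) (by positivity)]
            have h1 : Real.log 2 ≤ Real.log M := Real.log_le_log (by norm_num) hM
            have h2 : Real.log M ≤ Real.log (M / δ) := by
              apply Real.log_le_log (by linarith)
              rw [le_div_iff₀ hδ]; nlinarith
            linarith
          nlinarith
        rw [hPHe]
        simp only [hc₂def]
        linarith [mul_nonneg hc₀.le hlogHe]
    refine ⟨hclaim, ?_⟩
    have h4 : 4 * C * Real.log (M * (u / 4) / δ) / ε ^ 2 ≤ 4 * C * (c₂ * P) / ε ^ 2 :=
      (div_le_div_iff_of_pos_right (pow_pos hε 2)).mpr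
        (mul_le_mul_of_nonneg_left hclaim (by linarith : (0:ℝ) ≤ 4 * C))
    calc u ≤ 4 * C * Real.log (M * (u / 4) / δ) / ε ^ 2 := by
          rw [le_div_iff₀ (pow_pos hε 2)]; nlinarith
      _ ≤ T := by rw [hTdef]; exact h4
  -- integrability
  have hcontg : ContinuousOn
      (fun u => Real.sqrt (C * Real.log (M * (u / 4) / δ) / (u / 4))) (Set.Icc H N) := by
    apply Real.continuous_sqrt.comp_continuousOn
    apply ContinuousOn.div
    · apply ContinuousOn.mul continuousOn_const
      apply ContinuousOn.log (by fun_prop)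
      intro x hx
      have hx1 : (1 : ℝ) ≤ x := le_trans hH hx.1
      exact ne_of_gt (div_pos (mul_pos (by linarith) (by linarith)) hδ)
    · fun_prop
    · intro x hx
      have hx1 : (1 : ℝ) ≤ x := le_trans hH hx.1
      intro h; linarith [h]
  have hFmeas : Measurable F := by
    simp only [hFdef, clip]
    have hg : Measurable (fun u : ℝ => Real.sqrt (C * Real.log (M * (u / 4) / δ) / (u / 4))) := by
      apply Real.continuous_sqrt.measurable.comp
      apply Measurable.div
      · exact (Real.measurable_log.comp (by fun_prop)).const_mul C
      · fun_prop
    exact Measurable.ite (measurableSet_le measurable_const hg) hg measurable_const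
  have hFint : IntervalIntegrable F MeasureTheory.volume H N := by
    apply IntervalIntegrable.mono_fun
      ((by rwa [Set.uIcc_of_le hN] : ContinuousOn _ (Set.uIcc H N)).intervalIntegrable
        (u := fun u => Real.sqrt (C * Real.log (M * (u / 4) / δ) / (u / 4))))
      hFmeas.aestronglyMeasurable
    apply Filter.Eventually.of_forall
    intro x
    have hgx : (0:ℝ) ≤ Real.sqrt (C * Real.log (M * (x / 4) / δ) / (x / 4)) := Real.sqrt_nonneg _
    simp only [Real.norm_eq_abs]
    rw [abs_of_nonneg hgx, abs_of_nonneg (clip_nonneg ε hgx)]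
    exact clip_le_self ε hgx
  -- generic integral of K/sqrt u
  have sqrt_int : ∀ K E : ℝ, 0 ≤ K → H ≤ E →
      (∫ u in H..E, K / Real.sqrt u) ≤ K * (2 * Real.sqrt E) := by
    intro K E hK hE
    have h1 : Set.EqOn (fun u => K / Real.sqrt u) (fun u => K * u ^ (-(1/2) : ℝ))
        (Set.uIcc H E) := by
      intro u hu
      rw [Set.uIcc_of_le hE] at hu
      have hu0 : (0 : ℝ) < u := lt_of_lt_of_le (by linarith) hu.1
      simp only
      rw [Real.rpow_neg hu0.le, ← Real.sqrt_eq_rpow, div_eq_mul_inv]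
    rw [intervalIntegral.integral_congr h1, intervalIntegral.integral_const_mul,
      integral_rpow (Or.inl (by norm_num))]
    have h2 : (-(1/2) : ℝ) + 1 = 1/2 := by norm_num
    rw [h2, ← Real.sqrt_eq_rpow, ← Real.sqrt_eq_rpow]
    have h3 := Real.sqrt_nonneg H
    have h4 := Real.sqrt_nonneg E
    have h5 : Real.sqrt H ≤ Real.sqrt E := Real.sqrt_le_sqrt hE
    nlinarith [mul_nonneg hK h3]
  -- comparator integrability
  have hcomp : ∀ K : ℝ, ∀ E : ℝ, H ≤ E → E ≤ N →
      IntervalIntegrable (fun u => K / Real.sqrt u) MeasureTheory.volume H E := by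
    intro K E hE hEN
    apply ContinuousOn.intervalIntegrable
    rw [Set.uIcc_of_le hE]
    apply ContinuousOn.div continuousOn_const Real.continuous_sqrt.continuousOn
    intro x hx
    exact ne_of_gt (Real.sqrt_pos.mpr (by linarith [hx.1]))
  have hεpos := hε
  -- Bound B2
  have hB2 : (∫ u in H..N, F u) ≤ 48 * (1 + c₀) * (C / ε * P) := by
    have hRHSpos : 0 < 48 * (1 + c₀) * (C / ε * P) := by
      have := mul_pos (div_pos hC hε) hP0
      nlinarith
    by_cases hTH : T < H
    · have hzero : Set.EqOn F (fun _ => (0:ℝ)) (Set.uIcc H N) := by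
        intro u hu
        rw [Set.uIcc_of_le hN] at hu
        have hgu : ¬ ε ≤ Real.sqrt (C * Real.log (M * (u / 4) / δ) / (u / 4)) := by
          intro hgu
          have := (hLP u hu.1 hu.2 hgu).2
          linarith [hu.1]
        simp only [hFdef, clip, if_neg hgu]
      rw [intervalIntegral.integral_congr hzero, intervalIntegral.integral_zero]
      linarith
    · push_neg at hTH
      have hT1 : (1 : ℝ) ≤ T := le_trans hH hTH
      have key : ∀ E : ℝ, H ≤ E → E ≤ N → E ≤ 2 * T →
          (∫ u in H..E, F u) ≤ 48 * (1 + c₀) * (C / ε * P) := by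
        intro E hHE hEN hE2T
        have hQ : 0 ≤ C * (c₂ * P) := by
          apply mul_nonneg hC.le (mul_nonneg (by linarith) hP0.le)
        have h1 : (∫ u in H..E, F u) ≤
            ∫ u in H..E, Real.sqrt (4 * C * (c₂ * P)) / Real.sqrt u := by
          have hsub : Set.uIcc H E ⊆ Set.uIcc H N := by
            rw [Set.uIcc_of_le hHE, Set.uIcc_of_le hN]
            exact Set.Icc_subset_Icc le_rfl hEN
          apply intervalIntegral.integral_mono_on hHE (hFint.mono_set hsub)
            (hcomp _ E hHE hEN)
          intro x hx
          by_cases hgx : ε ≤ Real.sqrt (C * Real.log (M * (x / 4) / δ) / (x / 4))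
          · refine le_trans (clip_le_self ε (Real.sqrt_nonneg _)) ?_
            exact hg_le x hx.1 _ (mul_nonneg (by linarith) hP0.le)
              (hLP x hx.1 (le_trans hx.2 hEN) hgx).1
          · simp only [hFdef, clip, if_neg hgx]
            positivity
        have h2 := sqrt_int (Real.sqrt (4 * C * (c₂ * P))) E (Real.sqrt_nonneg _) hHE
        have hK : Real.sqrt (4 * C * (c₂ * P)) = 2 * Real.sqrt (C * (c₂ * P)) := by
          rw [show 4 * C * (c₂ * P) = 2 ^ 2 * (C * (c₂ * P)) by ring,
            Real.sqrt_mul (by norm_num) _, Real.sqrt_sq (by norm_num)]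
        have hsqE : Real.sqrt E ≤ 3 * Real.sqrt (C * (c₂ * P)) / ε := by
          rw [show (3 : ℝ) * Real.sqrt (C * (c₂ * P)) / ε =
              Real.sqrt ((3 * Real.sqrt (C * (c₂ * P)) / ε) ^ 2) from
            (Real.sqrt_sq (div_nonneg (by positivity) hε.le)).symm]
          apply Real.sqrt_le_sqrt
          have he : (3 * Real.sqrt (C * (c₂ * P)) / ε) ^ 2 = 9 * (C * (c₂ * P)) / ε ^ 2 := by
            rw [div_pow, mul_pow, Real.sq_sqrt hQ]; norm_num
          rw [he]
          have h8 : (2 : ℝ) * T = 8 * (C * (c₂ * P)) / ε ^ 2 := by rw [hTdef]; ring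
          have h9 : (8 : ℝ) * (C * (c₂ * P)) / ε ^ 2 ≤ 9 * (C * (c₂ * P)) / ε ^ 2 := by
            gcongr; linarith
          linarith
        calc (∫ u in H..E, F u)
            ≤ ∫ u in H..E, Real.sqrt (4 * C * (c₂ * P)) / Real.sqrt u := h1
          _ ≤ Real.sqrt (4 * C * (c₂ * P)) * (2 * Real.sqrt E) := h2
          _ ≤ 2 * Real.sqrt (C * (c₂ * P)) * (2 * (3 * Real.sqrt (C * (c₂ * P)) / ε)) := by
              rw [hK]
              apply mul_le_mul_of_nonneg_left (by linarith) (by positivity)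
          _ = 12 * (Real.sqrt (C * (c₂ * P)) ^ 2) / ε := by ring
          _ = 12 * (C * (c₂ * P)) / ε := by rw [Real.sq_sqrt hQ]
          _ = 48 * (1 + c₀) * (C / ε * P) := by
              simp only [hc₂def]; field_simp; ring
      by_cases h2T : 2 * T ≤ N
      · have hsub1 : Set.uIcc H (2 * T) ⊆ Set.uIcc H N := by
          rw [Set.uIcc_of_le (by linarith : H ≤ 2 * T), Set.uIcc_of_le hN]
          exact Set.Icc_subset_Icc le_rfl h2T
        have hsub2 : Set.uIcc (2 * T) N ⊆ Set.uIcc H N := by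
          rw [Set.uIcc_of_le h2T, Set.uIcc_of_le hN]
          exact Set.Icc_subset_Icc (by linarith) le_rfl
        have hi1 : IntervalIntegrable F MeasureTheory.volume H (2 * T) := hFint.mono_set hsub1
        have hi2 : IntervalIntegrable F MeasureTheory.volume (2 * T) N := hFint.mono_set hsub2
        have hsplit := (intervalIntegral.integral_add_adjacent_intervals hi1 hi2).symm
        have hzero : (∫ u in (2 * T)..N, F u) = 0 := by
          have hz : Set.EqOn F (fun _ => (0:ℝ)) (Set.uIcc (2 * T) N) := by
            intro u hu
            rw [Set.uIcc_of_le h2T] at hu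
            have hgu : ¬ ε ≤ Real.sqrt (C * Real.log (M * (u / 4) / δ) / (u / 4)) := by
              intro hgu
              have := (hLP u (by linarith [hu.1]) hu.2 hgu).2
              linarith [hu.1]
            simp only [hFdef, clip, if_neg hgu]
          rw [intervalIntegral.integral_congr hz, intervalIntegral.integral_zero]
        rw [hsplit, hzero, add_zero]
        exact key (2 * T) (by linarith) h2T le_rfl
      · exact key N hN le_rfl (by linarith)
  -- Bound B1
  have hLbar0 : 0 ≤ Real.log (M * N / δ) := Real.log_nonneg (by
    rw [le_div_iff₀ hδ]; nlinarith)
  have hB1 : (∫ u in H..N, F u) ≤ 48 * (1 + c₀) * Real.sqrt (C * N * Real.log (M * N / δ)) := by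
    have h1 : (∫ u in H..N, F u) ≤
        ∫ u in H..N, Real.sqrt (4 * C * Real.log (M * N / δ)) / Real.sqrt u := by
      apply intervalIntegral.integral_mono_on hN hFint (hcomp _ N hN le_rfl)
      intro x hx
      refine le_trans (clip_le_self ε (Real.sqrt_nonneg _)) ?_
      apply hg_le x hx.1 _ hLbar0
      apply Real.log_le_log (div_pos (mul_pos (by linarith) (by linarith [hx.1])) hδ)
      rw [div_le_div_iff₀ hδ hδ]
      have hx4 : x / 4 ≤ N := by linarith [hx.1, hx.2]
      have hMδ0 : (0:ℝ) ≤ M * δ := by nlinarith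
      nlinarith [mul_le_mul_of_nonneg_left hx4 hMδ0]
    have h2 := sqrt_int (Real.sqrt (4 * C * Real.log (M * N / δ))) N (Real.sqrt_nonneg _) hN
    have h3 : Real.sqrt (4 * C * Real.log (M * N / δ)) * (2 * Real.sqrt N) ≤
        48 * (1 + c₀) * Real.sqrt (C * N * Real.log (M * N / δ)) := by
      have ha : Real.sqrt (4 * C * Real.log (M * N / δ)) =
          2 * Real.sqrt (C * Real.log (M * N / δ)) := by
        rw [show 4 * C * Real.log (M * N / δ) = 2 ^ 2 * (C * Real.log (M * N / δ)) by ring,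
          Real.sqrt_mul (by norm_num) _, Real.sqrt_sq (by norm_num)]
      have hb : Real.sqrt (C * Real.log (M * N / δ)) * Real.sqrt N =
          Real.sqrt (C * N * Real.log (M * N / δ)) := by
        rw [← Real.sqrt_mul (mul_nonneg hC.le hLbar0) N]
        ring_nf
      have hs := Real.sqrt_nonneg (C * N * Real.log (M * N / δ))
      rw [ha]
      nlinarith [hb]
    linarith
  rw [mul_min_of_nonneg _ _ (by nlinarith : (0:ℝ) ≤ 48 * (1 + c₀))]
  exact le_min hB1 hB2
end

section
/- In the setting of an optimistic algorithm on a finite-horizon MDP: let Q̄_h ≥ Q⋆_h for all h with Q̄_{H+1} = 0, π_h(x) = argmax_a Q̄_h(x,a), V̄_h(x) = Q̄_h(x,π_h(x)), and surplus E_h(x,a) = Q̄_h(x,a) − r(x,a) − p(x,a)ᵀV̄_{h+1}. Fix a state x and stage h with gap_h(x, π_h(x)) > 0. Then gap_h(x, π_h(x)) ≤ E_h(x, π_h(x)) + p(x, π_h(x))ᵀ(V̄_{h+1} − V^π_{h+1}), where V^π is the value function of π. -/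
theorem stmt18 {S A : Type*} [Fintype S] [Fintype A] [Nonempty A]
    (H : ℕ) (hH : 1 ≤ H) (r : S → A → ℝ) (p : S → A → S → ℝ)
    (hp0 : ∀ x a x', 0 ≤ p x a x') (hp1 : ∀ x a, ∑ x', p x a x' = 1)
    (Qstar : ℕ → S → A → ℝ) (Vstar : ℕ → S → ℝ)
    (hVend : ∀ x, Vstar (H + 1) x = 0)
    (hQ : ∀ h ∈ Finset.Icc 1 H, ∀ x a,
      Qstar h x a = r x a + ∑ x', p x a x' * Vstar (h + 1) x')
    (hV : ∀ h ∈ Finset.Icc 1 H, ∀ x,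
      Vstar h x = Finset.univ.sup' Finset.univ_nonempty (fun a => Qstar h x a))
    (Qbar : ℕ → S → A → ℝ)
    (hQbarend : ∀ x a, Qbar (H + 1) x a = 0)
    (hopt : ∀ h ∈ Finset.Icc 1 H, ∀ x a, Qstar h x a ≤ Qbar h x a)
    (π : ℕ → S → A)
    (hgreedy : ∀ h ∈ Finset.Icc 1 H, ∀ x a, Qbar h x a ≤ Qbar h x (π h x))
    (Vbar : ℕ → S → ℝ)
    (hVbar : ∀ h x, Vbar h x = Qbar h x (π h x))
    (Vpi : ℕ → S → ℝ)
    (hVpiend : ∀ x, Vpi (H + 1) x = 0)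
    (hVpi : ∀ h ∈ Finset.Icc 1 H, ∀ x,
      Vpi h x = r x (π h x) + ∑ x', p x (π h x) x' * Vpi (h + 1) x')
    (h : ℕ) (hh : h ∈ Finset.Icc 1 H) (x : S)
    (hgap : 0 < Vstar h x - Qstar h x (π h x)) :
    Vstar h x - Qstar h x (π h x) ≤
      (Qbar h x (π h x) - r x (π h x) - ∑ x', p x (π h x) x' * Vbar (h + 1) x') +
        ∑ x', p x (π h x) x' * (Vbar (h + 1) x' - Vpi (h + 1) x') := by
  obtain ⟨hh1, hh2⟩ := Finset.mem_Icc.mp hh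
  -- Vpi ≤ Vstar by downward induction
  have key : ∀ k, k ≤ H → ∀ y, Vpi (H + 1 - k) y ≤ Vstar (H + 1 - k) y := by
    intro k
    induction k with
    | zero => intro _ y; simp [hVpiend, hVend]
    | succ n ih =>
      intro hn y
      have hn' : n ≤ H := Nat.le_of_succ_le hn
      have hmem : H + 1 - (n + 1) ∈ Finset.Icc 1 H := by
        refine Finset.mem_Icc.mpr ⟨?_, ?_⟩ <;> omega
      have heq : H + 1 - (n + 1) + 1 = H + 1 - n := by omega
      have hpi := hVpi _ hmem y
      have hq := hQ _ hmem y (π (H + 1 - (n + 1)) y)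
      have hsum : ∑ x', p y (π (H + 1 - (n + 1)) y) x' * Vpi (H + 1 - (n + 1) + 1) x'
          ≤ ∑ x', p y (π (H + 1 - (n + 1)) y) x' * Vstar (H + 1 - (n + 1) + 1) x' := by
        apply Finset.sum_le_sum
        intro x' _
        have := ih hn' x'
        rw [heq]
        exact mul_le_mul_of_nonneg_left (heq ▸ this) (hp0 _ _ _)
      have h1 : Vpi (H + 1 - (n + 1)) y ≤ Qstar (H + 1 - (n + 1)) y (π (H + 1 - (n + 1)) y) := by
        rw [hpi, hq]; linarith
      have h2 : Qstar (H + 1 - (n + 1)) y (π (H + 1 - (n + 1)) y) ≤ Vstar (H + 1 - (n + 1)) y := by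
        rw [hV _ hmem]
        exact Finset.le_sup' _ (Finset.mem_univ _)
      linarith
  have hVpile : ∀ y, Vpi (h + 1) y ≤ Vstar (h + 1) y := by
    intro y
    have := key (H - h) (by omega) y
    have heq : H + 1 - (H - h) = h + 1 := by omega
    rwa [heq] at this
  -- Vstar h x ≤ Qbar h x (π h x)
  have hVstarle : Vstar h x ≤ Qbar h x (π h x) := by
    rw [hV _ hh]
    apply Finset.sup'_le
    intro a _
    exact le_trans (hopt _ hh x a) (hgreedy _ hh x a)
  -- Vpi h x ≤ Qstar h x (π h x)
  have hVpiQ : Vpi h x ≤ Qstar h x (π h x) := by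
    rw [hVpi _ hh, hQ _ hh]
    have : ∑ x', p x (π h x) x' * Vpi (h + 1) x' ≤ ∑ x', p x (π h x) x' * Vstar (h + 1) x' :=
      Finset.sum_le_sum fun x' _ => mul_le_mul_of_nonneg_left (hVpile x') (hp0 _ _ _)
    linarith
  have hrw : (Qbar h x (π h x) - r x (π h x) - ∑ x', p x (π h x) x' * Vbar (h + 1) x') +
        ∑ x', p x (π h x) x' * (Vbar (h + 1) x' - Vpi (h + 1) x')
      = Qbar h x (π h x) - Vpi h x := by
    rw [hVpi _ hh]
    rw [Finset.sum_congr rfl (fun x' _ => mul_sub (p x (π h x) x') _ _), Finset.sum_sub_distrib]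
    ring
  rw [hrw]
  linarith
end
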